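/- Let λ1 ≠ 0 and γ1, γ2, γ3, γ4 be real numbers, and let g be the 4-dimensional real Lie algebra with basis u1,u2,u3,u4 and only nonzero brackets [u1,u3] = λ1·u2, [u2,u3] = −λ1·u1, [u1,u4] = γ1·u1 + γ2·u2, [u2,u4] = −γ2·u1 + γ1·u2, [u3,u4] = γ3·u1 + γ4·u2, equipped with the Lorentzian inner product whose only nonzero components on the basis are ⟨u1,u1⟩ = ⟨u2,u2⟩ = 1 and ⟨u3,u4⟩ = ⟨u4,u3⟩ = 1. If there exists a real number c such that Ric − c·Id is a derivation of g, then γ1 = 0. -/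
import Mathlib


namespace Stmt13

abbrev V : Type := Fin 4 → ℝ

noncomputable def e (i : Fin 4) : V := fun j => if j = i then 1 else 0

noncomputable def br (l1 g1 g2 g3 g4 : ℝ) (x y : V) : V :=
  let A := x 0 * y 3 - x 3 * y 0
  let B := x 1 * y 3 - x 3 * y 1
  let C := x 2 * y 3 - x 3 * y 2
  let P := x 0 * y 1 - x 1 * y 0
  let Q := x 0 * y 2 - x 2 * y 0
  let R := x 1 * y 2 - x 2 * y 1
  ![-(l1 * R) + g1 * A - g2 * B + g3 * C, l1 * Q + g2 * A + g1 * B + g4 * C, 0, 0]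

noncomputable def ip (x y : V) : ℝ := x 0 * y 0 + x 1 * y 1 + x 2 * y 3 + x 3 * y 2

noncomputable def Rcurv (l1 g1 g2 g3 g4 : ℝ) (nabla : V → V → V) (z x y : V) : V :=
  nabla (br l1 g1 g2 g3 g4 z x) y - nabla z (nabla x y) + nabla x (nabla z y)

noncomputable def rho (l1 g1 g2 g3 g4 : ℝ) (nabla : V → V → V) (x y : V) : ℝ :=
  ∑ i : Fin 4, Rcurv l1 g1 g2 g3 g4 nabla (e i) x y i

noncomputable def tau (Ric : V → V) : ℝ := ∑ i : Fin 4, Ric (e i) i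

def IsDeriv (l1 g1 g2 g3 g4 : ℝ) (D : V → V) : Prop :=
  ∀ x y : V, D (br l1 g1 g2 g3 g4 x y) = br l1 g1 g2 g3 g4 (D x) y + br l1 g1 g2 g3 g4 x (D y)


noncomputable def N (l1 g1 g2 g3 g4 : ℝ) (x y : V) : V :=
  ![ g1 * x 0 * y 3 + g2 * x 3 * y 1 + l1 * x 2 * y 1 + g3 * (x 2 * y 3 - x 3 * y 2) / 2,
     g1 * x 1 * y 3 - g2 * x 3 * y 0 - l1 * x 2 * y 0 + g4 * (x 2 * y 3 - x 3 * y 2) / 2,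
     -(g1 * (x 0 * y 0 + x 1 * y 1)) - g3 * (x 2 * y 0 + x 0 * y 2) / 2
       - g4 * (x 2 * y 1 + x 1 * y 2) / 2,
     g3 * (x 3 * y 0 + x 0 * y 3) / 2 + g4 * (x 3 * y 1 + x 1 * y 3) / 2 ]

set_option maxHeartbeats 1000000 in
theorem stmt_13 (l1 g1 g2 g3 g4 : ℝ) (hl1 : l1 ≠ 0)
    (nabla : V → V → V)
    (hKoszul : ∀ x y z : V, 2 * ip (nabla x y) z =
      ip (br l1 g1 g2 g3 g4 x y) z - ip (br l1 g1 g2 g3 g4 y z) x + ip (br l1 g1 g2 g3 g4 z x) y)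
    (Ric : V → V)
    (hRic : ∀ x y : V, ip (Ric x) y = rho l1 g1 g2 g3 g4 nabla x y)
    (c : ℝ) (hder : IsDeriv l1 g1 g2 g3 g4 (fun v => Ric v - c • v)) :
    g1 = 0 := by
  have hN : nabla = N l1 g1 g2 g3 g4 := by
    funext x y
    funext i
    fin_cases i
    · have h := hKoszul x y (e 0)
      simp only [ip, br, e, N] at h ⊢
      simp at h ⊢
      linear_combination h / 2
    · have h := hKoszul x y (e 1)
      simp only [ip, br, e, N] at h ⊢
      simp at h ⊢
      linear_combination h / 2
    · have h := hKoszul x y (e 3)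
      simp only [ip, br, e, N] at h ⊢
      simp at h ⊢
      linear_combination h / 2
    · have h := hKoszul x y (e 2)
      simp only [ip, br, e, N] at h ⊢
      simp at h ⊢
      linear_combination h / 2
  subst hN
  have hR0 : ∀ v : V, Ric v 0 = rho l1 g1 g2 g3 g4 (N l1 g1 g2 g3 g4) v (e 0) := by
    intro v
    have h := hRic v (e 0)
    simp only [ip, e] at h
    simp at h
    linarith
  have hR1 : ∀ v : V, Ric v 1 = rho l1 g1 g2 g3 g4 (N l1 g1 g2 g3 g4) v (e 1) := by
    intro v
    have h := hRic v (e 1)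
    simp only [ip, e] at h
    simp at h
    linarith
  have hR2 : ∀ v : V, Ric v 2 = rho l1 g1 g2 g3 g4 (N l1 g1 g2 g3 g4) v (e 3) := by
    intro v
    have h := hRic v (e 3)
    simp only [ip, e] at h
    simp at h
    linarith
  have hR3 : ∀ v : V, Ric v 3 = rho l1 g1 g2 g3 g4 (N l1 g1 g2 g3 g4) v (e 2) := by
    intro v
    have h := hRic v (e 2)
    simp only [ip, e] at h
    simp at h
    linarith
  -- equation from (e 0, e 2), component 3 : gives g3 = 0
  have h1 := congrFun (hder (e 0) (e 2)) 3
  simp only [Pi.sub_apply, Pi.smul_apply, smul_eq_mul, Pi.add_apply] at h1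
  rw [hR3] at h1
  simp only [rho, Rcurv, N, br, e, ip, Fin.sum_univ_four] at h1
  simp at h1
  have hg3 : g3 = 0 := h1.resolve_right hl1
  -- equation from (e 1, e 2), component 3 : gives g4 = 0
  have h2 := congrFun (hder (e 1) (e 2)) 3
  simp only [Pi.sub_apply, Pi.smul_apply, smul_eq_mul, Pi.add_apply] at h2
  rw [hR3] at h2
  simp only [rho, Rcurv, N, br, e, ip, Fin.sum_univ_four] at h2
  simp at h2
  have hg4 : g4 = 0 := h2.resolve_right hl1
  subst hg3
  subst hg4
  -- equation from (e 1, e 2), component 0 : gives c = 0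
  have h3 := congrFun (hder (e 1) (e 2)) 0
  simp only [Pi.sub_apply, Pi.smul_apply, smul_eq_mul, Pi.add_apply] at h3
  simp [rho, Rcurv, N, br, e, ip, Fin.sum_univ_four, hR0, hR1, hR2, hR3] at h3
  have hc : c = 0 := by
    have h3' : l1 * c = 0 := by linarith
    exact (mul_eq_zero.mp h3').resolve_left hl1
  subst hc
  -- equation from (e 0, e 3), component 1 : gives g1 = 0
  have h4 := congrFun (hder (e 0) (e 3)) 1
  simp only [Pi.sub_apply, Pi.smul_apply, smul_eq_mul, Pi.add_apply] at h4
  simp [rho, Rcurv, N, br, e, ip, Fin.sum_univ_four, hR0, hR1, hR2, hR3] at h4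
  ring_nf at h4
  have h4' : g1 ^ 2 * l1 = 0 := by linarith
  have hg : g1 ^ 2 = 0 := (mul_eq_zero.mp h4').resolve_right hl1
  exact pow_eq_zero_iff (n := 2) (by norm_num) |>.mp hg


end Stmt13
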